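/- arXiv:1709.10280 — 4 statements merged into one kernel-verified Lean document; each statement's English description precedes it below -/
import Mathlib

section
/- For any probability distribution p = (p_1,...,p_n) with all p_i > 0, the NMIM satisfies L(p) ≥ n - 1, with equality if and only if p is the uniform distribution p_i = 1/n for all i. -/
open Real Finset

/-
With t_i = (1 - p_i) / p_i the sum inside the logarithm is the p-average of e^{t_i},
while the p-average of the t_i is Σ (1 - p_i) = n - 1. Jensen's inequality for the strictly convex
exponential gives e^{n-1} ≤ Σ p_i e^{t_i}, with equality iff all t_i equal n - 1, i.e. iff p_i = 1/n.
-/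

namespace Real

variable {ι : Type*} {s : Finset ι} {w t : ι → ℝ}

lemma exp_sum_mul_le_sum_mul_exp (hw : ∀ i ∈ s, 0 ≤ w i) (hw₁ : ∑ i ∈ s, w i = 1) :
    exp (∑ i ∈ s, w i * t i) ≤ ∑ i ∈ s, w i * exp (t i) :=
  convexOn_exp.map_sum_le hw hw₁ fun _ _ ↦ Set.mem_univ _

lemma sum_mul_le_log_sum_mul_exp (hw : ∀ i ∈ s, 0 ≤ w i) (hw₁ : ∑ i ∈ s, w i = 1) :
    ∑ i ∈ s, w i * t i ≤ log (∑ i ∈ s, w i * exp (t i)) := by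
  have hexp := exp_sum_mul_le_sum_mul_exp (t := t) hw hw₁
  exact (le_log_iff_exp_le ((exp_pos _).trans_le hexp)).2 hexp

lemma log_sum_mul_exp_eq_sum_mul_iff (hw : ∀ i ∈ s, 0 < w i) (hw₁ : ∑ i ∈ s, w i = 1) :
    log (∑ i ∈ s, w i * exp (t i)) = ∑ i ∈ s, w i * t i ↔
      ∀ j ∈ s, t j = ∑ i ∈ s, w i * t i := by
  have hpos : 0 < ∑ i ∈ s, w i * exp (t i) :=
    (exp_pos _).trans_le (exp_sum_mul_le_sum_mul_exp (fun i hi ↦ (hw i hi).le) hw₁)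
  rw [← exp_eq_exp, exp_log hpos, eq_comm]
  exact strictConvexOn_exp.map_sum_eq_iff hw hw₁ fun _ _ ↦ Set.mem_univ _

end Real

lemma sum_mul_one_sub_div_self {ι : Type*} [Fintype ι] {p : ι → ℝ} (hp : ∀ i, p i ≠ 0)
    (hsum : ∑ i, p i = 1) : ∑ i, p i * ((1 - p i) / p i) = Fintype.card ι - 1 := by
  simp_rw [mul_div_cancel₀ _ (hp _), sum_sub_distrib, hsum, sum_const, card_univ, nsmul_one]

lemma one_sub_div_self_eq_sub_one_iff {x c : ℝ} (hx : x ≠ 0) :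
    (1 - x) / x = c - 1 ↔ x = 1 / c := by
  rw [sub_div, div_self hx, sub_left_inj, one_div, one_div, inv_eq_iff_eq_inv]

theorem nmim_lower_bound (n : ℕ) (p : Fin n → ℝ)
    (hp : ∀ i, 0 < p i) (hsum : ∑ i, p i = 1) :
    (n : ℝ) - 1 ≤ Real.log (∑ i, p i * Real.exp ((1 - p i) / p i)) ∧
    (Real.log (∑ i, p i * Real.exp ((1 - p i) / p i)) = (n : ℝ) - 1 ↔
      ∀ i, p i = 1 / (n : ℝ)) := by
  have hmean : ∑ i, p i * ((1 - p i) / p i) = (n : ℝ) - 1 := by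
    simpa using sum_mul_one_sub_div_self (fun i ↦ (hp i).ne') hsum
  refine ⟨hmean ▸ sum_mul_le_log_sum_mul_exp (fun i _ ↦ (hp i).le) hsum, ?_⟩
  rw [← hmean, log_sum_mul_exp_eq_sum_mul_iff (fun i _ ↦ hp i) hsum, hmean]
  simp only [mem_univ, true_imp_iff, one_sub_div_self_eq_sub_one_iff (hp _).ne']
end

section
/- If an event of probability p is split into two sub-events with probabilities q and r (q, r > 0, q + r = p ≤ 1), then the total importance does not decrease: q e^{(1-q)/q} + r e^{(1-r)/r} ≥ p e^{(1-p)/p}. -/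
open Real

theorem importance_split (p q r : ℝ) (hq : 0 < q) (hr : 0 < r)
    (hqr : q + r = p) (hp : p ≤ 1) :
    p * Real.exp ((1 - p) / p) ≤
      q * Real.exp ((1 - q) / q) + r * Real.exp ((1 - r) / r) := by
  have hp0 : 0 < p := by linarith
  have key : ∀ x : ℝ, 0 < x → x ≤ p → x * Real.exp ((1 - p) / p) ≤ x * Real.exp ((1 - x) / x) := by
    intro x hx hxp
    have h1 : (1 - p) / p ≤ (1 - x) / x := by
      rw [div_le_div_iff₀ hp0 hx]
      nlinarith
    have := Real.exp_le_exp.mpr h1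
    nlinarith [Real.exp_pos ((1 - p) / p)]
  have h1 := key q hq (by linarith)
  have h2 := key r hr (by linarith)
  have : p * Real.exp ((1 - p) / p) = q * Real.exp ((1 - p) / p) + r * Real.exp ((1 - p) / p) := by
    rw [← hqr]; ring
  linarith
end

section
/- For probability distributions p = (p_1,...,p_n) and q = (q_1,...,q_m) with all entries in (0,1], the NMIM of the product distribution satisfies L(p) + L(q) ≤ L(pq), where pq denotes the joint distribution (p_i q_j)_{i,j}. -/
open Real Finset

theorem nmim_superadditive (n m : ℕ) (p : Fin n → ℝ) (q : Fin m → ℝ)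
    (hp : ∀ i, 0 < p i ∧ p i ≤ 1) (hq : ∀ j, 0 < q j ∧ q j ≤ 1)
    (hps : ∑ i, p i = 1) (hqs : ∑ j, q j = 1) :
    Real.log (∑ i, p i * Real.exp ((1 - p i) / p i)) +
      Real.log (∑ j, q j * Real.exp ((1 - q j) / q j)) ≤
    Real.log (∑ i, ∑ j, (p i * q j) *
      Real.exp ((1 - p i * q j) / (p i * q j))) := by
  have hnen : (Finset.univ : Finset (Fin n)).Nonempty := by
    rcases (Finset.univ : Finset (Fin n)).eq_empty_or_nonempty with h | h
    · rw [h] at hps; simp at hps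
    · exact h
  have hnem : (Finset.univ : Finset (Fin m)).Nonempty := by
    rcases (Finset.univ : Finset (Fin m)).eq_empty_or_nonempty with h | h
    · rw [h] at hqs; simp at hqs
    · exact h
  have hA : 0 < ∑ i, p i * Real.exp ((1 - p i) / p i) :=
    Finset.sum_pos (fun i _ => mul_pos (hp i).1 (Real.exp_pos _)) hnen
  have hB : 0 < ∑ j, q j * Real.exp ((1 - q j) / q j) :=
    Finset.sum_pos (fun j _ => mul_pos (hq j).1 (Real.exp_pos _)) hnem
  rw [← Real.log_mul hA.ne' hB.ne']
  apply Real.log_le_log (mul_pos hA hB)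
  rw [Finset.sum_mul_sum]
  apply Finset.sum_le_sum
  intro i _
  apply Finset.sum_le_sum
  intro j _
  have hpi := hp i
  have hqj := hq j
  rw [mul_mul_mul_comm, ← Real.exp_add]
  apply mul_le_mul_of_nonneg_left _ (mul_pos hpi.1 hqj.1).le
  apply Real.exp_le_exp.mpr
  rw [div_add_div _ _ hpi.1.ne' hqj.1.ne',
    div_le_div_iff₀ (mul_pos hpi.1 hqj.1) (mul_pos hpi.1 hqj.1)]
  nlinarith [mul_nonneg (sub_nonneg.mpr hpi.2) (sub_nonneg.mpr hqj.2),
    mul_pos hpi.1 hqj.1]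
end

section
/- For 0 < p < 1/2 and ε > 0, the difference of log-importances satisfies L(p) − L(p + ε(1−2p)) ≥ 0, and moreover exp(L(p + ε(1−2p))) + exp(L(1 − p − ε(1−2p))) ≤ exp(L(p)) + exp(L(1−p)), i.e., the NMIM of the BSC output Bernoulli distribution is at most the NMIM of the input Bernoulli(p) distribution, provided p + ε(1−2p) ≤ 1/2. -/
/-!
Writing `importance x = x * exp ((1 - x) / x) = exp (L x)`, both claims are monotonicity
statements, since the channel moves `p` to some `q` with `p < q ≤ 1 / 2`. The derivative of
`importance` is `-g ((1 - x) / x)` with `g u = u * exp u`; hence `importance` decreases on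
`(0, 1]`, and `t ↦ importance t + importance (1 - t)` has derivative
`g (t / (1 - t)) - g ((1 - t) / t) < 0` for `t < 1 / 2`.
-/

open Real Set

noncomputable def importance (x : ℝ) : ℝ := x * exp ((1 - x) / x)

theorem hasDerivAt_importance {x : ℝ} (hx : x ≠ 0) :
    HasDerivAt importance (-((1 - x) / x * exp ((1 - x) / x))) x := by
  have hexp : HasDerivAt (fun y => exp ((1 - y) / y))
      (exp ((1 - x) / x) * ((-1 * x - (1 - x) * 1) / x ^ 2)) x :=
    (((hasDerivAt_id' x).const_sub 1).div (hasDerivAt_id' x) hx).exp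
  refine ((hasDerivAt_id' x).mul hexp).congr_deriv ?_
  field_simp
  ring

theorem strictMonoOn_mul_exp : StrictMonoOn (fun u : ℝ => u * exp u) (Ici 0) :=
  fun _ ha _ _ hab => mul_lt_mul'' hab (exp_lt_exp.2 hab) ha (exp_pos _).le

theorem strictAntiOn_importance : StrictAntiOn importance (Ioc 0 1) := by
  refine strictAntiOn_of_hasDerivWithinAt_neg (convex_Ioc 0 1)
    (f' := fun x => -((1 - x) / x * exp ((1 - x) / x)))
    (fun x hx => (hasDerivAt_importance hx.1.ne').continuousAt.continuousWithinAt)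
    (fun x hx => ?_) (fun x hx => ?_) <;> rw [interior_Ioc] at hx
  · exact (hasDerivAt_importance hx.1.ne').hasDerivWithinAt
  · have h1x : 0 < (1 - x) / x := div_pos (by linarith [hx.2]) hx.1
    nlinarith [exp_pos ((1 - x) / x)]

-- `log (importance t + importance (1 - t)) - 1` is the NMIM of `Bernoulli t`.
theorem strictAntiOn_importance_add_importance_one_sub :
    StrictAntiOn (fun t => importance t + importance (1 - t)) (Ioc 0 (1 / 2)) := by
  have hderiv : ∀ t ∈ Ioo (0 : ℝ) 1, HasDerivAt (fun t => importance t + importance (1 - t))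
      (t / (1 - t) * exp (t / (1 - t)) - (1 - t) / t * exp ((1 - t) / t)) t := by
    intro t ht
    have hsymm : HasDerivAt (fun t => importance (1 - t))
        (-(-(t / (1 - t) * exp (t / (1 - t))))) t := by
      simpa using ((hasDerivAt_importance (sub_pos.2 ht.2).ne').comp_const_sub 1 t)
    refine ((hasDerivAt_importance ht.1.ne').add hsymm).congr_deriv ?_
    ring
  refine strictAntiOn_of_hasDerivWithinAt_neg (convex_Ioc 0 (1 / 2))
    (f' := fun t => t / (1 - t) * exp (t / (1 - t)) - (1 - t) / t * exp ((1 - t) / t))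
    (fun t ht => (hderiv t ⟨ht.1, by linarith [ht.2]⟩).continuousAt.continuousWithinAt)
    (fun t ht => ?_) (fun t ht => ?_) <;> rw [interior_Ioc] at ht <;> obtain ⟨ht0, ht2⟩ := ht
  · exact (hderiv t ⟨ht0, by linarith⟩).hasDerivWithinAt
  · have h1t : 0 < 1 - t := by linarith
    -- `u ↦ u * exp u` is increasing and `t / (1 - t) < 1 < (1 - t) / t`
    have hlt : t / (1 - t) < (1 - t) / t := by
      rw [div_lt_div_iff₀ h1t ht0]
      nlinarith
    have hmono := strictMonoOn_mul_exp (div_pos ht0 h1t).le (div_pos h1t ht0).le hlt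
    exact sub_neg.2 hmono

theorem bsc_nmim_decrease (p ε : ℝ) (hp0 : 0 < p) (hp : p < 1 / 2)
    (hε : 0 < ε) (hq : p + ε * (1 - 2 * p) ≤ 1 / 2) :
    let L : ℝ → ℝ := fun x => Real.log (x * Real.exp ((1 - x) / x))
    let q : ℝ := p + ε * (1 - 2 * p)
    0 ≤ L p - L q ∧
    Real.exp (L q) + Real.exp (L (1 - q)) ≤
      Real.exp (L p) + Real.exp (L (1 - p)) := by
  intro L q
  have hpq : p < q := lt_add_of_pos_right p (mul_pos hε (by linarith))
  have hq0 : 0 < q := hp0.trans hpq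
  have hexpL : ∀ x, 0 < x → exp (L x) = importance x := fun x hx =>
    exp_log (mul_pos hx (exp_pos _))
  constructor
  · have hle := (strictAntiOn_importance ⟨hp0, by linarith⟩ ⟨hq0, by linarith⟩ hpq).le
    exact sub_nonneg.2 (log_le_log (mul_pos hq0 (exp_pos _)) hle)
  · rw [hexpL p hp0, hexpL q hq0, hexpL (1 - p) (by linarith), hexpL (1 - q) (by linarith)]
    exact (strictAntiOn_importance_add_importance_one_sub ⟨hp0, hp.le⟩ ⟨hq0, hq⟩ hpq).le
end
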